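/- arXiv:1810.11885 — 3 statements merged into one kernel-verified Lean document; each statement's English description precedes it below -/
import Mathlib

section
/- For all λ, μ, ν ∈ ℂ, the rational gl_n R-matrix satisfies the Yang–Baxter equation on ℂ^n ⊗ ℂ^n ⊗ ℂ^n: R_{1,2}(λ − μ) · R_{1,3}(λ − ν) · R_{2,3}(μ − ν) = R_{2,3}(μ − ν) · R_{1,3}(λ − ν) · R_{1,2}(λ − μ). -/
open Matrix BigOperators

noncomputable section

namespace GLnSoV

/-- The permutation operator on `ℂ^n ⊗ ℂ^n`. -/
def permOp (n : ℕ) : Matrix (Fin n × Fin n) (Fin n × Fin n) ℂ :=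
  Matrix.of fun p q => if p.1 = q.2 ∧ p.2 = q.1 then (1 : ℂ) else 0

/-- The rational `gl_n` R-matrix `R(λ) = λ·Id + η·P`. -/
def Rmat (n : ℕ) (η lam : ℂ) : Matrix (Fin n × Fin n) (Fin n × Fin n) ℂ :=
  lam • (1 : Matrix (Fin n × Fin n) (Fin n × Fin n) ℂ) + η • permOp n

/-- `R(λ)` acting on the `a`-th and `b`-th factors of a tensor product of copies of `ℂ^n`. -/
def Rab (n : ℕ) (η : ℂ) {ι : Type} [Fintype ι] [DecidableEq ι] (a b : ι) (lam : ℂ) :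
    Matrix (ι → Fin n) (ι → Fin n) ℂ :=
  Matrix.of fun x y =>
    Rmat n η lam (x a, x b) (y a, y b) *
      ∏ c ∈ Finset.univ.filter (fun c => c ≠ a ∧ c ≠ b), (if x c = y c then (1 : ℂ) else 0)

/-- `R(λ)` acting on the auxiliary space and the `j`-th site of the quantum space. -/
def Raux (n N : ℕ) (η : ℂ) (lam : ℂ) (j : Fin N) :
    Matrix (Fin n × (Fin N → Fin n)) (Fin n × (Fin N → Fin n)) ℂ :=
  Matrix.of fun p q =>
    Rmat n η lam (p.1, p.2 j) (q.1, q.2 j) *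
      ∏ c ∈ Finset.univ.filter (fun c => c ≠ j), (if p.2 c = q.2 c then (1 : ℂ) else 0)

/-- The twist matrix `K` acting on the auxiliary space. -/
def Kaux (n N : ℕ) (K : Matrix (Fin n) (Fin n) ℂ) :
    Matrix (Fin n × (Fin N → Fin n)) (Fin n × (Fin N → Fin n)) ℂ :=
  Matrix.of fun p q => K p.1 q.1 * (if p.2 = q.2 then (1 : ℂ) else 0)

/-- The twisted monodromy matrix `M^{(K)}(λ) = K_a R_{a,N}(λ-ξ_N) ⋯ R_{a,1}(λ-ξ_1)`. -/
def monodromy (n N : ℕ) (η : ℂ) (ξ : Fin N → ℂ) (K : Matrix (Fin n) (Fin n) ℂ) (lam : ℂ) :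
    Matrix (Fin n × (Fin N → Fin n)) (Fin n × (Fin N → Fin n)) ℂ :=
  Kaux n N K * (List.ofFn (fun j : Fin N => Raux n N η (lam - ξ j.rev) j.rev)).prod

/-- The operator permuting the tensor factors of `(ℂ^n)^{⊗m}` according to `π`. -/
def permTensorOp (n m : ℕ) (π : Equiv.Perm (Fin m)) :
    Matrix (Fin m → Fin n) (Fin m → Fin n) ℂ :=
  Matrix.of fun v w => if v = w ∘ π then (1 : ℂ) else 0

/-- The antisymmetrizer `P⁻_{1…m}` on `(ℂ^n)^{⊗m}`. -/
def antisym (n m : ℕ) : Matrix (Fin m → Fin n) (Fin m → Fin n) ℂ :=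
  (m.factorial : ℂ)⁻¹ •
    ∑ π : Equiv.Perm (Fin m), ((Equiv.Perm.sign π : ℤ) : ℂ) • permTensorOp n m π

/-- The monodromy matrix with the `j`-th copy of `(ℂ^n)^{⊗m}` as auxiliary space. -/
def MauxJ (n N : ℕ) (η : ℂ) (ξ : Fin N → ℂ) (K : Matrix (Fin n) (Fin n) ℂ) (m : ℕ)
    (j : Fin m) (lam : ℂ) :
    Matrix ((Fin m → Fin n) × (Fin N → Fin n)) ((Fin m → Fin n) × (Fin N → Fin n)) ℂ :=
  Matrix.of fun p q =>
    monodromy n N η ξ K lam (p.1 j, p.2) (q.1 j, q.2) *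
      ∏ c ∈ Finset.univ.filter (fun c => c ≠ j), (if p.1 c = q.1 c then (1 : ℂ) else 0)

/-- The antisymmetrizer tensored with the identity of the quantum space. -/
def antisymH (n N m : ℕ) :
    Matrix ((Fin m → Fin n) × (Fin N → Fin n)) ((Fin m → Fin n) × (Fin N → Fin n)) ℂ :=
  Matrix.of fun p q => antisym n m p.1 q.1 * (if p.2 = q.2 then (1 : ℂ) else 0)

/-- The fused transfer matrix `T_m^{(K)}(λ)`, the trace over the `m` auxiliary copies of `ℂ^n`
of `P⁻_{1…m} M₁(λ) M₂(λ-η) ⋯ M_m(λ-(m-1)η)`. -/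
def transfer (n N : ℕ) (η : ℂ) (ξ : Fin N → ℂ) (K : Matrix (Fin n) (Fin n) ℂ)
    (m : ℕ) (lam : ℂ) : Matrix (Fin N → Fin n) (Fin N → Fin n) ℂ :=
  Matrix.of fun x y =>
    ∑ v : Fin m → Fin n,
      (antisymH n N m *
        (List.ofFn (fun j : Fin m => MauxJ n N η ξ K m j (lam - (j : ℕ) * η))).prod)
        (v, x) (v, y)

/-- `K ⊗ ⋯ ⊗ K` on `(ℂ^n)^{⊗m}`. -/
def Ktensor (n : ℕ) (K : Matrix (Fin n) (Fin n) ℂ) (m : ℕ) :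
    Matrix (Fin m → Fin n) (Fin m → Fin n) ℂ :=
  Matrix.of fun v w => ∏ j, K (v j) (w j)

/-- The asymptotic coefficient `tr(P⁻_{1…m} K₁ ⋯ K_m)`. -/
def asymCoef (n : ℕ) (K : Matrix (Fin n) (Fin n) ℂ) (m : ℕ) : ℂ :=
  (antisym n m * Ktensor n K m).trace

/-- The scalar quantum determinant. -/
def qdet (n N : ℕ) (η : ℂ) (ξ : Fin N → ℂ) (K : Matrix (Fin n) (Fin n) ℂ) (lam : ℂ) : ℂ :=
  K.det * ∏ b, ((lam - ξ b + η) * ∏ m ∈ Finset.Icc 1 (n - 1), (lam - ξ b - (m : ℂ) * η))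

/-- The candidate eigenvalue function `t₁^{(K,x)}(λ)`. -/
def t1fun (n N : ℕ) (ξ : Fin N → ℂ) (K : Matrix (Fin n) (Fin n) ℂ) (x : Fin N → ℂ)
    (lam : ℂ) : ℂ :=
  K.trace * ∏ a, (lam - ξ a) +
    ∑ a, x a * ∏ b ∈ Finset.univ.erase a, (lam - ξ b) / (ξ a - ξ b)

/-- The interpolation coefficients `g_a^{(m+1)}(λ)` (second argument is `m`). -/
def gfun (N : ℕ) (η : ℂ) (ξ : Fin N → ℂ) (m : ℕ) (a : Fin N) (lam : ℂ) : ℂ :=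
  (∏ b ∈ Finset.univ.erase a, (lam - ξ b) / (ξ a - ξ b)) *
    ∏ b, ∏ r ∈ Finset.Icc 1 m, (ξ a - ξ b - (r : ℂ) * η)⁻¹

/-- The candidate eigenvalue functions `t_m^{(K,x)}(λ)`, defined recursively. -/
def tfun (n N : ℕ) (η : ℂ) (ξ : Fin N → ℂ) (K : Matrix (Fin n) (Fin n) ℂ)
    (x : Fin N → ℂ) : ℕ → ℂ → ℂ
  | 0, _ => 1
  | 1, lam => t1fun n N ξ K x lam
  | m + 2, lam =>
      (∏ b, ∏ r ∈ Finset.Icc 1 (m + 1), (lam - ξ b - (r : ℂ) * η)) *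
        (asymCoef n K (m + 2) * ∏ b, (lam - ξ b) +
          ∑ a, gfun N η ξ (m + 1) a lam * x a * tfun n N η ξ K x (m + 1) (ξ a - η))

/-- The SoV operator `∏_{a} (T₁^{(K)}(ξ_a))^{h_a}`. -/
def sovOp (n N : ℕ) (η : ℂ) (ξ : Fin N → ℂ) (K : Matrix (Fin n) (Fin n) ℂ)
    (h : Fin N → Fin n) : Matrix (Fin N → Fin n) (Fin N → Fin n) ℂ :=
  (List.ofFn (fun a : Fin N => transfer n N η ξ K 1 (ξ a) ^ (h a : ℕ))).prod

/-- The SoV covector `⟨h| = ⟨S| ∏_a (T₁^{(K)}(ξ_a))^{h_a}`. -/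
def sovCovector (n N : ℕ) (η : ℂ) (ξ : Fin N → ℂ) (K : Matrix (Fin n) (Fin n) ℂ)
    (S : (Fin N → Fin n) → ℂ) (h : Fin N → Fin n) : (Fin N → Fin n) → ℂ :=
  S ᵥ* sovOp n N η ξ K h

/-- The SoV basis hypothesis: the covectors `⟨h|` form a basis of the dual space. -/
def sovBasisHyp (n N : ℕ) (η : ℂ) (ξ : Fin N → ℂ) (K : Matrix (Fin n) (Fin n) ℂ)
    (S : (Fin N → Fin n) → ℂ) : Prop :=
  ∃ B : Module.Basis (Fin N → Fin n) ℂ ((Fin N → Fin n) → ℂ),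
    ∀ h, B h = sovCovector n N η ξ K S h

/-- The coefficient `α₁(λ) = ᾱ ∏_a (λ + η - ξ_a)`. -/
def alpha1 (N : ℕ) (η : ℂ) (ξ : Fin N → ℂ) (abar lam : ℂ) : ℂ :=
  abar * ∏ a, (lam + η - ξ a)

/-- The coefficients `α_b(λ)` of the quantum spectral curve. -/
def alphaF (N : ℕ) (η : ℂ) (ξ : Fin N → ℂ) (abar : ℂ) : ℕ → ℂ → ℂ
  | 0, _ => -1
  | j + 1, lam =>
      (-1 : ℂ) ^ j * ∏ h ∈ Finset.range (j + 1), alpha1 N η ξ abar (lam - (h : ℂ) * η)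

/-!
Writing `P_σ` for the operator permuting the tensor factors by `σ`, one has
`R_{a,b}(λ) = λ + η P_{(a b)}` and `σ ↦ P_σ` is a group homomorphism. Expanding both sides of the
Yang–Baxter equation, the constant and linear terms agree trivially; with `λ - ν = (λ - μ) + (μ - ν)`
the quadratic terms agree because `P₁₂P₁₃ = P₁₃P₂₃ = P₂₃P₁₂` and `P₁₃P₁₂ = P₂₃P₁₃ = P₁₂P₂₃`
(both sides are the two 3-cycles), and the cubic terms by the braid relation
`P₁₂P₁₃P₂₃ = P₂₃P₁₃P₁₂`. All these are identities in `S₃`, checked by computation.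
-/

section TensorPerm

variable {ι : Type*} (α : Type*)

@[simps]
def sitePermHom : Equiv.Perm ι →* Equiv.Perm (ι → α) where
  toFun σ := σ.arrowCongr (Equiv.refl α)
  map_one' := rfl
  map_mul' _ _ := rfl

variable [DecidableEq ι] [Fintype ι] [DecidableEq α] [Fintype α] (R : Type*) [Semiring R]

def tensorPermMatrix : Equiv.Perm ι →* Matrix (ι → α) (ι → α) R :=
  Matrix.permMatrixHom.comp (sitePermHom α)

variable {α R} in
lemma tensorPermMatrix_apply (σ : Equiv.Perm ι) (x y : ι → α) :
    tensorPermMatrix α R σ x y = if x ∘ σ = y then 1 else 0 := by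
  simp only [tensorPermMatrix, MonoidHom.comp_apply, Matrix.permMatrixHom_apply,
    sitePermHom_apply, PEquiv.toMatrix_apply, Equiv.toPEquiv_apply, Option.mem_def,
    Option.some.injEq]
  rfl

end TensorPerm

lemma funext_iff_off_pair {ι β : Type*} (a b : ι) {x y : ι → β} :
    x = y ↔ (x a = y a ∧ x b = y b) ∧ ∀ c, c ≠ a ∧ c ≠ b → x c = y c := by
  refine ⟨fun h => by simp [h], fun ⟨⟨ha, hb⟩, h⟩ => funext fun c => ?_⟩
  by_cases hca : c = a
  · exact hca ▸ ha
  by_cases hcb : c = b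
  · exact hcb ▸ hb
  exact h c ⟨hca, hcb⟩

lemma Rab_eq_smul_one_add_smul_tensorPermMatrix (n : ℕ) (η : ℂ) {ι : Type} [Fintype ι]
    [DecidableEq ι] (a b : ι) (lam : ℂ) :
    Rab n η a b lam = lam • 1 + η • tensorPermMatrix (Fin n) ℂ (Equiv.swap a b) := by
  ext x y
  have hswap : x ∘ Equiv.swap a b = y ↔
      (x b = y a ∧ x a = y b) ∧ ∀ c, c ≠ a ∧ c ≠ b → x c = y c := by
    rw [funext_iff_off_pair a b]
    simp +contextual [Equiv.swap_apply_of_ne_of_ne]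
  simp only [Rab, Rmat, permOp, Matrix.of_apply, Matrix.add_apply, Matrix.smul_apply,
    Matrix.one_apply, tensorPermMatrix_apply, smul_eq_mul, Finset.prod_boole, hswap,
    funext_iff_off_pair a b (x := x), Prod.mk.injEq, Finset.mem_filter, Finset.mem_univ,
    true_and, ite_and]
  split_ifs <;> simp_all

theorem yang_baxter_of_transposition_relations {K A : Type*} [CommRing K] [Ring A] [Algebra K A]
    {p q r : A}
    (hqr : q * r = p * q) (hrp : r * p = p * q) (hrq : r * q = q * p) (hpr : p * r = q * p)
    (hpqr : p * q * r = r * q * p) (η u v : K) :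
    (u • 1 + η • p) * ((u + v) • 1 + η • q) * (v • 1 + η • r) =
      (v • 1 + η • r) * ((u + v) • 1 + η • q) * (u • 1 + η • p) := by
  simp only [add_mul, mul_add, smul_mul_assoc, mul_smul_comm, one_mul, mul_one,
    hpqr, hqr, hrp, hrq, hpr]
  module

theorem yang_baxter_equation_general (n : ℕ) (η : ℂ) (lam mu nu : ℂ) :
    Rab n η (0 : Fin 3) 1 (lam - mu) * Rab n η (0 : Fin 3) 2 (lam - nu) *
        Rab n η (1 : Fin 3) 2 (mu - nu) =
      Rab n η (1 : Fin 3) 2 (mu - nu) * Rab n η (0 : Fin 3) 2 (lam - nu) *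
        Rab n η (0 : Fin 3) 1 (lam - mu) := by
  have hsplit : lam - nu = (lam - mu) + (mu - nu) := by ring
  simp only [Rab_eq_smul_one_add_smul_tensorPermMatrix, hsplit]
  apply yang_baxter_of_transposition_relations <;> simp only [← map_mul] <;> congr 1 <;> decide

/-- the rational `gl_n` R-matrix satisfies the Yang–Baxter equation on
`ℂ^n ⊗ ℂ^n ⊗ ℂ^n`. -/
theorem yang_baxter_equation (n : ℕ) (hn : 1 ≤ n) (η : ℂ) (lam mu nu : ℂ) :
    Rab n η (0 : Fin 3) 1 (lam - mu) * Rab n η (0 : Fin 3) 2 (lam - nu) *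
        Rab n η (1 : Fin 3) 2 (mu - nu) =
      Rab n η (1 : Fin 3) 2 (mu - nu) * Rab n η (0 : Fin 3) 2 (lam - nu) *
        Rab n η (0 : Fin 3) 1 (lam - mu) :=
  yang_baxter_equation_general n η lam mu nu

end GLnSoV
end
end

section
/- The twisted monodromy matrix satisfies the RTT (Yang–Baxter) relation: for all λ, μ ∈ ℂ, as operators on ℂ^n ⊗ ℂ^n ⊗ H one has R_{a,b}(λ − μ) · M_a^{(K)}(λ) · M_b^{(K)}(μ) = M_b^{(K)}(μ) · M_a^{(K)}(λ) · R_{a,b}(λ − μ), where a and b denote the first and second auxiliary copies of ℂ^n, M_a^{(K)}(λ) acts on the a-th auxiliary copy and H (identity on the b-th copy), M_b^{(K)}(μ) acts on the b-th auxiliary copy and H (identity on the a-th copy), and R_{a,b} acts on the two auxiliary copies (identity on H). -/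
open Matrix BigOperators

noncomputable section

namespace GLnSoV

/-- The monodromy matrix acting on the first auxiliary copy of `ℂ^n` (identity on the second). -/
def monA (n N : ℕ) (η : ℂ) (ξ : Fin N → ℂ) (K : Matrix (Fin n) (Fin n) ℂ) (lam : ℂ) :
    Matrix ((Fin n × Fin n) × (Fin N → Fin n)) ((Fin n × Fin n) × (Fin N → Fin n)) ℂ :=
  Matrix.of fun p q =>
    monodromy n N η ξ K lam (p.1.1, p.2) (q.1.1, q.2) * (if p.1.2 = q.1.2 then (1 : ℂ) else 0)

/-- The monodromy matrix acting on the second auxiliary copy of `ℂ^n` (identity on the first). -/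
def monB (n N : ℕ) (η : ℂ) (ξ : Fin N → ℂ) (K : Matrix (Fin n) (Fin n) ℂ) (lam : ℂ) :
    Matrix ((Fin n × Fin n) × (Fin N → Fin n)) ((Fin n × Fin n) × (Fin N → Fin n)) ℂ :=
  Matrix.of fun p q =>
    monodromy n N η ξ K lam (p.1.2, p.2) (q.1.2, q.2) * (if p.1.1 = q.1.1 then (1 : ℂ) else 0)

/-- The R-matrix acting on the two auxiliary copies of `ℂ^n` (identity on the quantum space). -/
def RabQ (n N : ℕ) (η : ℂ) (lam : ℂ) :
    Matrix ((Fin n × Fin n) × (Fin N → Fin n)) ((Fin n × Fin n) × (Fin N → Fin n)) ℂ :=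
  Matrix.of fun p q => Rmat n η lam p.1 q.1 * (if p.2 = q.2 then (1 : ℂ) else 0)


/-!
Regard the two auxiliary copies and the `N` quantum sites as the sites `Bool ⊕ Fin N` of a
single chain. There `R_{ab}(u) = u + η P_{ab}`, where `P_{ab}` permutes the tensor factors by the
transposition `(a b)`, so the Yang–Baxter equation reduces to relations among transpositions of
three sites, and `R`-matrices on disjoint pairs of sites commute. The RTT relation for the
untwisted monodromy follows by pushing `R_{ab}(λ - μ)` through the two products of local
`R`-matrices one quantum site at a time; the twist passes through because `K ⊗ K` commutes with
`P_{ab}`, and `K_a`, `K_b` commute with the `R`-matrices acting on the other auxiliary copy.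
-/

section RTTAlgebra

variable {M : Type*} [Monoid M]

theorem rtt_prod_ofFn (r : M) : ∀ {N : ℕ} (f g : Fin N → M),
    (∀ i, r * f i * g i = g i * f i * r) → (∀ i j, i ≠ j → Commute (f i) (g j)) →
    r * (List.ofFn f).prod * (List.ofFn g).prod = (List.ofFn g).prod * (List.ofFn f).prod * r
  | 0, _, _, _, _ => by simp
  | N + 1, f, g, hrtt, hcomm => by
    set F := (List.ofFn fun i : Fin N => f i.succ).prod
    set G := (List.ofFn fun i : Fin N => g i.succ).prod
    have ih : r * F * G = G * F * r :=
      rtt_prod_ofFn r _ _ (fun i => hrtt i.succ) fun i j h => hcomm _ _ (Fin.succ_inj.not.mpr h)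
    have hF : Commute F (g 0) := Commute.list_prod_left _ _ fun x hx => by
      obtain ⟨i, rfl⟩ := List.mem_ofFn.mp hx
      exact hcomm _ _ (Fin.succ_ne_zero i)
    have hG : Commute (f 0) G := Commute.list_prod_right _ _ fun x hx => by
      obtain ⟨i, rfl⟩ := List.mem_ofFn.mp hx
      exact hcomm _ _ (Fin.succ_ne_zero i).symm
    simp only [List.ofFn_succ, List.prod_cons]
    calc r * (f 0 * F) * (g 0 * G) = r * f 0 * g 0 * (F * G) := by
          simp only [mul_assoc, hF.left_comm]
      _ = g 0 * f 0 * (r * F * G) := by rw [hrtt]; simp only [mul_assoc]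
      _ = g 0 * G * (f 0 * F) * r := by rw [ih]; simp only [mul_assoc, hG.left_comm]

theorem rtt_twist {r ka kb ta tb : M} (hr : Commute r (ka * kb)) (hk : Commute ka kb)
    (hkb : Commute kb ta) (hka : Commute ka tb) (hrtt : r * ta * tb = tb * ta * r) :
    r * (ka * ta) * (kb * tb) = kb * tb * (ka * ta) * r :=
  calc r * (ka * ta) * (kb * tb) = r * (ka * kb) * (ta * tb) := by
        simp only [mul_assoc, hkb.symm.left_comm]
    _ = ka * kb * (r * ta * tb) := by rw [hr.eq]; simp only [mul_assoc]
    _ = kb * tb * (ka * ta) * r := by rw [hrtt]; simp only [mul_assoc, hk.left_comm, hka.left_comm]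

end RTTAlgebra

section SiteOperators

open Equiv

variable {R : Type*} [CommRing R] {V : Type*} {ι : Type*} [Fintype ι]

section Tensor

variable [Fintype V] [DecidableEq ι]

def siteTensor (M : ι → Matrix V V R) : Matrix (ι → V) (ι → V) R :=
  Matrix.of fun x y => ∏ c, M c (x c) (y c)

theorem siteTensor_mul (M M' : ι → Matrix V V R) :
    siteTensor M * siteTensor M' = siteTensor (M * M') := by
  ext x y
  simp only [siteTensor, Matrix.mul_apply, Matrix.of_apply, Pi.mul_apply, Fintype.prod_sum,
    Finset.prod_mul_distrib]

theorem Commute.siteTensor {M M' : ι → Matrix V V R} (h : Commute M M') :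
    Commute (siteTensor M) (siteTensor M') := by
  rw [Commute, SemiconjBy, siteTensor_mul, siteTensor_mul, h.eq]

end Tensor

variable [DecidableEq V]

variable (R V) in
def permSites (σ : Perm ι) : Matrix (ι → V) (ι → V) R :=
  Perm.permMatrix R (σ.symm.arrowCongr (Equiv.refl V) : Perm (ι → V))

theorem permSites_apply (σ : Perm ι) (x y : ι → V) :
    permSites R V σ x y = if x ∘ σ = y then 1 else 0 := by
  simp only [permSites, PEquiv.toMatrix_apply, Equiv.toPEquiv_apply, Option.mem_def,
    Option.some.injEq]
  rfl

variable [Fintype V] [DecidableEq ι]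

theorem permSites_mul (σ τ : Perm ι) :
    permSites R V σ * permSites R V τ = permSites R V (σ * τ) := by
  rw [permSites, permSites, permSites, ← Matrix.permMatrix_mul]
  rfl

theorem commute_permSites_siteTensor {σ : Perm ι} {M : ι → Matrix V V R}
    (h : ∀ c, M (σ c) = M c) : Commute (permSites R V σ) (siteTensor M) := by
  ext x y
  rw [permSites, PEquiv.toMatrix_toPEquiv_mul, PEquiv.mul_toMatrix_toPEquiv]
  exact Fintype.prod_equiv σ _ _ fun c => by simp [h]

variable (V) in
def rMatrixAt (η : R) (a b : ι) (u : R) : Matrix (ι → V) (ι → V) R :=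
  u • 1 + η • permSites R V (swap a b)

def twistAt (K : Matrix V V R) (a : ι) : Matrix (ι → V) (ι → V) R :=
  siteTensor (Pi.mulSingle a K)

theorem rMatrixAt_ybe (η : R) {a b c : ι} (hab : a ≠ b) (hac : a ≠ c) (hbc : b ≠ c)
    (u v : R) :
    rMatrixAt V η a b (u - v) * rMatrixAt V η a c u * rMatrixAt V η b c v =
      rMatrixAt V η b c v * rMatrixAt V η a c u * rMatrixAt V η a b (u - v) := by
  obtain ⟨h₁, h₂, h₃, h₄, h₅⟩ :
      swap a c * swap a b = swap a b * swap b c ∧ swap b c * swap a c = swap a b * swap b c ∧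
      swap a c * swap b c = swap b c * swap a b ∧ swap a b * swap a c = swap b c * swap a b ∧
      swap a b * (swap b c * swap a b) = swap b c * (swap a b * swap b c) := by
    refine ⟨?_, ?_, ?_, ?_, ?_⟩ <;> ext x <;>
      rcases eq_or_ne x a with rfl | hxa <;> rcases eq_or_ne x b with rfl | hxb <;>
      rcases eq_or_ne x c with rfl | hxc <;> simp_all [swap_apply_of_ne_of_ne, eq_comm]
  simp only [rMatrixAt, add_mul, mul_add, smul_mul_assoc, mul_smul_comm, one_mul, mul_one,
    permSites_mul, mul_assoc]
  rw [h₁, h₂, h₃, h₄, h₅]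
  match_scalars <;> ring

theorem rMatrixAt_commute_rMatrixAt (η : R) {a b c d : ι} (hac : a ≠ c) (had : a ≠ d)
    (hbc : b ≠ c) (hbd : b ≠ d) (u v : R) :
    Commute (rMatrixAt V η a b u) (rMatrixAt V η c d v) := by
  have hswap : swap a b * swap c d = swap c d * swap a b := by
    ext x
    rcases eq_or_ne x a with rfl | hxa <;> rcases eq_or_ne x b with rfl | hxb <;>
      rcases eq_or_ne x c with rfl | hxc <;> rcases eq_or_ne x d with rfl | hxd <;>
      simp_all [swap_apply_of_ne_of_ne, eq_comm]
  simp only [Commute, SemiconjBy, rMatrixAt, add_mul, mul_add, smul_mul_assoc, mul_smul_comm,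
    one_mul, mul_one, permSites_mul, hswap]
  match_scalars <;> ring

theorem Commute.rMatrixAt_left {X : Matrix (ι → V) (ι → V) R} (η : R) {a b : ι}
    (h : Commute (permSites R V (swap a b)) X) (u : R) : Commute (rMatrixAt V η a b u) X :=
  ((Commute.one_left X).smul_left u).add_left (h.smul_left η)

theorem twistAt_commute_rMatrixAt (K : Matrix V V R) (η : R) {a b c : ι} (hab : a ≠ b)
    (hac : a ≠ c) (u : R) : Commute (twistAt K a) (rMatrixAt V η b c u) := by
  refine (Commute.rMatrixAt_left η (commute_permSites_siteTensor fun x => ?_) u).symm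
  simp only [Pi.mulSingle_apply, swap_apply_eq_iff, swap_apply_of_ne_of_ne hab hac]

theorem twistAt_commute_twistAt (K : Matrix V V R) (a b : ι) :
    Commute (twistAt (ι := ι) K a) (twistAt K b) := by
  obtain rfl | hab := eq_or_ne a b
  · rfl
  · exact Commute.siteTensor (Pi.mulSingle_commute (f := fun _ => Matrix V V R) hab K K)

theorem rMatrixAt_commute_twistAt_mul_twistAt (K : Matrix V V R) (η : R) (a b : ι) (u : R) :
    Commute (rMatrixAt V η a b u) (twistAt K a * twistAt K b) := by
  refine Commute.rMatrixAt_left η ?_ u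
  rw [twistAt, twistAt, siteTensor_mul]
  refine commute_permSites_siteTensor fun c => ?_
  simp only [Pi.mul_apply, Pi.mulSingle_apply, swap_apply_eq_iff, swap_apply_left,
    swap_apply_right]
  split_ifs <;> simp

variable {N : ℕ}

def monodromyAt (η : R) (K : Matrix V V R) (a : ι) (s : Fin N → ι) (θ : Fin N → R) (u : R) :
    Matrix (ι → V) (ι → V) R :=
  twistAt K a * (List.ofFn fun j => rMatrixAt V η a (s j) (u - θ j)).prod

theorem twistAt_commute_prod_rMatrixAt (K : Matrix V V R) (η : R) {a b : ι} (hab : a ≠ b)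
    {s : Fin N → ι} (hs : ∀ j, s j ≠ a) (θ : Fin N → R) (u : R) :
    Commute (twistAt K a) (List.ofFn fun j => rMatrixAt V η b (s j) (u - θ j)).prod :=
  Commute.list_prod_right _ _ fun _ hx => by
    obtain ⟨j, rfl⟩ := List.mem_ofFn.mp hx
    exact twistAt_commute_rMatrixAt K η hab (hs j).symm _

theorem monodromyAt_rtt (η : R) (K : Matrix V V R) {a b : ι} (hab : a ≠ b) {s : Fin N → ι}
    (hs : Function.Injective s) (ha : ∀ j, s j ≠ a) (hb : ∀ j, s j ≠ b) (θ : Fin N → R)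
    (u v : R) :
    rMatrixAt V η a b (u - v) * monodromyAt η K a s θ u * monodromyAt η K b s θ v =
      monodromyAt η K b s θ v * monodromyAt η K a s θ u * rMatrixAt V η a b (u - v) := by
  refine rtt_twist (rMatrixAt_commute_twistAt_mul_twistAt K η a b _)
    (twistAt_commute_twistAt K a b) (twistAt_commute_prod_rMatrixAt K η hab.symm hb θ u)
    (twistAt_commute_prod_rMatrixAt K η hab ha θ v) (rtt_prod_ofFn _ _ _ (fun j => ?_) ?_)
  · have := rMatrixAt_ybe (V := V) η hab (ha j).symm (hb j).symm (u - θ j) (v - θ j)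
    rwa [sub_sub_sub_cancel_right] at this
  · exact fun i j hij => rMatrixAt_commute_rMatrixAt η hab (ha j).symm (hb i) (hs.ne hij) _ _

end SiteOperators

section ChainSites

open Equiv Kronecker

theorem funext_iff_split_pair {ι V : Type*} [Fintype ι] [DecidableEq ι] (a b : ι)
    {x y : ι → V} : x = y ↔ (x a = y a ∧ x b = y b) ∧
      ∀ c ∈ Finset.univ.filter (fun c => c ≠ a ∧ c ≠ b), x c = y c := by
  refine ⟨by rintro rfl; simp, fun ⟨⟨ha, hb⟩, h⟩ => funext fun c => ?_⟩
  by_cases hca : c = a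
  · exact hca ▸ ha
  by_cases hcb : c = b
  · exact hcb ▸ hb
  exact h c (by simp [hca, hcb])

theorem rMatrixAt_eq_Rab {n : ℕ} {ι : Type} [Fintype ι] [DecidableEq ι] (η : ℂ) (a b : ι)
    (u : ℂ) : rMatrixAt (Fin n) η a b u = Rab n η a b u := by
  ext x y
  have hswap : x ∘ swap a b = y ↔ (x a = y b ∧ x b = y a) ∧
      ∀ c ∈ Finset.univ.filter (fun c => c ≠ a ∧ c ≠ b), x c = y c := by
    rw [funext_iff_split_pair a b]
    simp only [Function.comp_apply, swap_apply_left, swap_apply_right]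
    refine and_congr and_comm (forall₂_congr fun c hc => ?_)
    obtain ⟨hca, hcb⟩ := (Finset.mem_filter.mp hc).2
    rw [swap_apply_of_ne_of_ne hca hcb]
  simp only [rMatrixAt, Rab, Rmat, permOp, Matrix.add_apply, Matrix.smul_apply,
    Matrix.one_apply, permSites_apply, Matrix.of_apply, Prod.mk.injEq, Finset.prod_boole,
    smul_eq_mul]
  simp only [hswap, funext_iff_split_pair a b (x := x) (y := y), ite_and]
  split_ifs <;> ring

variable {n N : ℕ}

/-- Site `inl false` carries the first auxiliary copy, `inl true` the second. -/
def siteEquiv (n N : ℕ) : (Bool ⊕ Fin N → Fin n) ≃ (Fin n × Fin n) × (Fin N → Fin n) :=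
  (sumArrowEquivProdArrow _ _ _).trans ((boolArrowEquivProd _).prodCongr (Equiv.refl _))

-- Not proved by `rfl`, so that `simp` rewrites with them under `Decidable` instances too.
@[simp] theorem siteEquiv_symm_apply_inl (p : (Fin n × Fin n) × (Fin N → Fin n)) (s : Bool) :
    (siteEquiv n N).symm p (.inl s) = if s then p.1.2 else p.1.1 := by
  cases s <;> rfl

@[simp] theorem siteEquiv_symm_apply_inr (p : (Fin n × Fin n) × (Fin N → Fin n)) (j : Fin N) :
    (siteEquiv n N).symm p (.inr j) = p.2 j := by
  obtain ⟨_, _⟩ := p; rfl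

abbrev siteReindex (n N : ℕ) :
    Matrix (Bool ⊕ Fin N → Fin n) (Bool ⊕ Fin N → Fin n) ℂ ≃ₐ[ℂ]
      Matrix ((Fin n × Fin n) × (Fin N → Fin n)) ((Fin n × Fin n) × (Fin N → Fin n)) ℂ :=
  Matrix.reindexAlgEquiv ℂ ℂ (siteEquiv n N)

def auxSplit (s : Bool) :
    (Fin n × Fin n) × (Fin N → Fin n) ≃ (Fin n × (Fin N → Fin n)) × Fin n where
  toFun p := (((siteEquiv n N).symm p (.inl s), p.2), (siteEquiv n N).symm p (.inl !s))
  invFun r := (if s then (r.2, r.1.1) else (r.1.1, r.2), r.1.2)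
  left_inv p := by cases s <;> rfl
  right_inv r := by cases s <;> rfl

/-- `X ⊗ 1`, with `X` acting on the auxiliary copy `s` and the quantum space. -/
def auxEmbed (s : Bool) :
    Matrix (Fin n × (Fin N → Fin n)) (Fin n × (Fin N → Fin n)) ℂ →*
      Matrix ((Fin n × Fin n) × (Fin N → Fin n))
        ((Fin n × Fin n) × (Fin N → Fin n)) ℂ where
  toFun X := (X ⊗ₖ (1 : Matrix (Fin n) (Fin n) ℂ)).submatrix (auxSplit s) (auxSplit s)
  map_one' := by rw [Matrix.one_kronecker_one, Matrix.submatrix_one_equiv]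
  map_mul' X Y := by rw [Matrix.submatrix_mul_equiv, ← Matrix.mul_kronecker_mul, one_mul]

theorem auxEmbed_apply (s : Bool)
    (X : Matrix (Fin n × (Fin N → Fin n)) (Fin n × (Fin N → Fin n)) ℂ)
    (p q : (Fin n × Fin n) × (Fin N → Fin n)) :
    auxEmbed s X p q =
      X ((siteEquiv n N).symm p (.inl s), p.2) ((siteEquiv n N).symm q (.inl s), q.2) *
        if (siteEquiv n N).symm p (.inl !s) = (siteEquiv n N).symm q (.inl !s) then 1 else 0 := by
  simp [auxEmbed, auxSplit, Matrix.one_apply]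

theorem monA_eq_auxEmbed (η : ℂ) (ξ : Fin N → ℂ) (K : Matrix (Fin n) (Fin n) ℂ)
    (u : ℂ) :
    monA n N η ξ K u = auxEmbed false (monodromy n N η ξ K u) := by
  ext p q; rw [auxEmbed_apply]; rfl

theorem monB_eq_auxEmbed (η : ℂ) (ξ : Fin N → ℂ) (K : Matrix (Fin n) (Fin n) ℂ)
    (u : ℂ) :
    monB n N η ξ K u = auxEmbed true (monodromy n N η ξ K u) := by
  ext p q; rw [auxEmbed_apply]; rfl

theorem RabQ_eq_siteReindex (η u : ℂ) :
    RabQ n N η u = siteReindex n N (rMatrixAt (Fin n) η (.inl false) (.inl true) u) := by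
  rw [rMatrixAt_eq_Rab]
  ext p q
  simp only [RabQ, Rab, Matrix.coe_reindexAlgEquiv, Matrix.reindex_apply, Matrix.of_apply,
    Matrix.submatrix_apply, siteEquiv_symm_apply_inl, siteEquiv_symm_apply_inr,
    Finset.prod_filter, Fintype.prod_sum_type, Fintype.prod_bool]
  simp [Finset.prod_boole, funext_iff]

theorem auxEmbed_Raux (s : Bool) (η u : ℂ) (j : Fin N) :
    auxEmbed s (Raux n N η u j) = siteReindex n N (rMatrixAt (Fin n) η (.inl s) (.inr j) u) := by
  rw [rMatrixAt_eq_Rab]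
  ext p q
  rw [auxEmbed_apply]
  simp only [Raux, Rab, Matrix.coe_reindexAlgEquiv, Matrix.reindex_apply, Matrix.of_apply,
    Matrix.submatrix_apply, siteEquiv_symm_apply_inl, siteEquiv_symm_apply_inr,
    Finset.prod_filter, Fintype.prod_sum_type, Fintype.prod_bool]
  cases s <;> simp

theorem auxEmbed_Kaux (s : Bool) (K : Matrix (Fin n) (Fin n) ℂ) :
    auxEmbed s (Kaux n N K) = siteReindex n N (twistAt K (.inl s)) := by
  ext p q
  rw [auxEmbed_apply]
  simp only [Kaux, twistAt, siteTensor, Matrix.coe_reindexAlgEquiv, Matrix.reindex_apply,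
    Matrix.of_apply, Matrix.submatrix_apply, siteEquiv_symm_apply_inl, siteEquiv_symm_apply_inr,
    Fintype.prod_sum_type, Fintype.prod_bool]
  cases s <;> simp [Matrix.one_apply, Finset.prod_boole, funext_iff] <;> split_ifs <;> rfl

theorem auxEmbed_monodromy (s : Bool) (η : ℂ) (ξ : Fin N → ℂ)
    (K : Matrix (Fin n) (Fin n) ℂ) (u : ℂ) : auxEmbed s (monodromy n N η ξ K u) =
      siteReindex n N (monodromyAt η K (.inl s) (Sum.inr ∘ Fin.rev) (ξ ∘ Fin.rev) u) := by
  simp only [monodromy, monodromyAt, map_mul, map_list_prod, List.map_ofFn, Function.comp_def,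
    auxEmbed_Kaux, auxEmbed_Raux]

end ChainSites

theorem monodromy_RTT_general (n N : ℕ) (η : ℂ) (ξ : Fin N → ℂ)
    (K : Matrix (Fin n) (Fin n) ℂ) (lam mu : ℂ) :
    RabQ n N η (lam - mu) * monA n N η ξ K lam * monB n N η ξ K mu =
      monB n N η ξ K mu * monA n N η ξ K lam * RabQ n N η (lam - mu) := by
  rw [RabQ_eq_siteReindex, monA_eq_auxEmbed, monB_eq_auxEmbed, auxEmbed_monodromy,
    auxEmbed_monodromy]
  simp only [← map_mul]
  exact congrArg _ (monodromyAt_rtt η K (by simp)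
    (Sum.inr_injective.comp Fin.rev_injective) (fun _ => Sum.inr_ne_inl)
    (fun _ => Sum.inr_ne_inl) _ lam mu)

/-- the twisted monodromy matrix satisfies the RTT (Yang–Baxter) relation. -/
theorem monodromy_RTT (n N : ℕ) (hn : 1 ≤ n) (hN : 1 ≤ N) (η : ℂ) (ξ : Fin N → ℂ)
    (K : Matrix (Fin n) (Fin n) ℂ) (lam mu : ℂ) :
    RabQ n N η (lam - mu) * monA n N η ξ K lam * monB n N η ξ K mu =
      monB n N η ξ K mu * monA n N η ξ K lam * RabQ n N η (lam - mu) :=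
  monodromy_RTT_general n N η ξ K lam mu

end GLnSoV
end
end

section
/- For every 1 ≤ m ≤ n, the fused transfer matrix is polynomial in the spectral parameter of degree mN with central leading coefficient: there exist operators A_0, …, A_{mN} on H, independent of λ, such that T_m^{(K)}(λ) = Σ_{k=0}^{mN} λ^k A_k for all λ ∈ ℂ, and A_{mN} = tr_{1…m}(P^−_{1…m} K_1 K_2 ⋯ K_m) · Id_H, where K_j denotes K acting on the j-th copy of ℂ^n in (ℂ^n)^{⊗m}. -/
open Matrix BigOperators

noncomputable section

/-! Each `R`-matrix is `λ · Id` plus a constant, so the monodromy matrix `M(λ - s)` is a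
polynomial of degree `N` in `λ` whose top coefficient is `K_a`, whatever the shift `s`.
Polynomial expansions multiply with multiplied top coefficients and pass through linear maps,
so `P⁻ M₁(λ) ⋯ M_m(λ - (m-1)η)` has degree `mN` with top coefficient `P⁻ K₁ ⋯ K_m ⊗ Id_H`,
whose partial trace is `tr(P⁻ K₁ ⋯ K_m) · Id_H`. -/

open Polynomial
open scoped Kronecker

/-- `f x = ∑_{k ≤ d} x ^ k • A k` for some coefficients `A k` independent of `x`, with `A d = L`. -/
def HasPolyExpansion {R V : Type*} [CommSemiring R] [AddCommMonoid V] [Module R V]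
    (f : R → V) (d : ℕ) (L : V) : Prop :=
  ∃ A : ℕ → V, (∀ x, f x = ∑ k ∈ Finset.range (d + 1), x ^ k • A k) ∧ A d = L

namespace HasPolyExpansion

section Module

variable {R V W : Type*} [CommSemiring R] [AddCommMonoid V] [Module R V]
  [AddCommMonoid W] [Module R W]

theorem const (c : V) : HasPolyExpansion (fun _ : R => c) 0 c :=
  ⟨fun _ => c, fun x => by simp, rfl⟩

theorem smul_add (a b : V) : HasPolyExpansion (fun x : R => x • a + b) 1 a :=
  ⟨fun k => if k = 0 then b else a, fun x => by simp [Finset.sum_range_succ, add_comm], rfl⟩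

theorem map {f : R → V} {d : ℕ} {L : V} (h : HasPolyExpansion f d L) (φ : V →ₗ[R] W) :
    HasPolyExpansion (fun x => φ (f x)) d (φ L) := by
  obtain ⟨A, hA, rfl⟩ := h
  exact ⟨fun k => φ (A k), fun x => by simp [hA], rfl⟩

end Module

section Algebra

variable {R S : Type*} [CommSemiring R] [Semiring S] [Algebra R S]

theorem of_polynomial (p : S[X]) {d : ℕ} (hp : p.natDegree ≤ d) :
    HasPolyExpansion (fun x : R => p.eval (algebraMap R S x)) d (p.coeff d) := by
  refine ⟨p.coeff, fun x => ?_, rfl⟩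
  dsimp only
  rw [eval_eq_sum_range' (Nat.lt_succ_of_le hp)]
  refine Finset.sum_congr rfl fun k _ => ?_
  rw [← map_pow, ← Algebra.commutes, Algebra.smul_def]

theorem exists_polynomial {f : R → S} {d : ℕ} {L : S} (h : HasPolyExpansion f d L) :
    ∃ p : S[X], p.natDegree ≤ d ∧ p.coeff d = L ∧ ∀ x, f x = p.eval (algebraMap R S x) := by
  obtain ⟨A, hA, rfl⟩ := h
  refine ⟨∑ k ∈ Finset.range (d + 1), monomial k (A k), ?_, ?_, fun x => ?_⟩
  · exact natDegree_sum_le_of_forall_le _ _ fun k hk =>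
      (natDegree_monomial_le _).trans (Nat.lt_succ_iff.mp (Finset.mem_range.mp hk))
  · simp [coeff_monomial]
  · simp [hA, eval_finsetSum, Algebra.smul_def, ← map_pow, Algebra.commutes]

theorem mul {f g : R → S} {a b : ℕ} {L M : S} (hf : HasPolyExpansion f a L)
    (hg : HasPolyExpansion g b M) : HasPolyExpansion (fun x => f x * g x) (a + b) (L * M) := by
  obtain ⟨p, hpa, rfl, hfp⟩ := hf.exists_polynomial
  obtain ⟨q, hqb, rfl, hgq⟩ := hg.exists_polynomial
  have hfg : (fun x => f x * g x) = fun x : R => (p * q).eval (algebraMap R S x) := by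
    funext x
    simp only [hfp, hgq, eval]
    exact (eval₂_mul_noncomm _ _ fun k => Algebra.commute_algebraMap_right _ _).symm
  rw [hfg, ← coeff_mul_add_eq_of_natDegree_le hpa hqb]
  exact of_polynomial _ (natDegree_mul_le.trans (add_le_add hpa hqb))

theorem list_prod {k d : ℕ} {f : Fin k → R → S} {L : Fin k → S}
    (h : ∀ i, HasPolyExpansion (f i) d (L i)) :
    HasPolyExpansion (fun x => (List.ofFn fun i => f i x).prod) (k * d) (List.ofFn L).prod := by
  induction k with
  | zero => simpa using const (1 : S)
  | succ k ih =>
    rw [Nat.succ_mul, Nat.add_comm (k * d) d]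
    simpa only [List.ofFn_succ, List.prod_cons] using (h 0).mul (ih fun i => h i.succ)

end Algebra

end HasPolyExpansion

theorem List.prod_ofFn_mulSingle {m : ℕ} {M : Fin m → Type*} [∀ i, Monoid (M i)]
    (x : ∀ i, M i) : (List.ofFn fun i => Pi.mulSingle i (x i)).prod = x := by
  conv_rhs => rw [← Finset.noncommProd_mulSingle x]
  simp [Finset.noncommProd, Fin.univ_val_map]

namespace Matrix

variable {R : Type*} [CommSemiring R] {ι κ α β : Type*}

theorem prod_ofFn_kronecker_one [Fintype α] [DecidableEq α] [Fintype β] [DecidableEq β]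
    {k : ℕ} (A : Fin k → Matrix α α R) :
    (List.ofFn fun i => A i ⊗ₖ (1 : Matrix β β R)).prod = (List.ofFn A).prod ⊗ₖ 1 := by
  induction k with
  | zero => exact one_kronecker_one.symm
  | succ k ih =>
    rw [List.ofFn_succ, List.prod_cons, ih, List.ofFn_succ, List.prod_cons, ← mul_kronecker_mul,
      mul_one]

def partialTraceLeft (α β : Type*) [Fintype α] :
    Matrix (α × β) (α × β) R →ₗ[R] Matrix β β R where
  toFun M := of fun x y => ∑ v, M (v, x) (v, y)
  map_add' M M' := by ext; simp [Finset.sum_add_distrib]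
  map_smul' c M := by ext; simp [Finset.mul_sum]

theorem partialTraceLeft_kronecker [Fintype α] (A : Matrix α α R) (B : Matrix β β R) :
    partialTraceLeft α β (A ⊗ₖ B) = A.trace • B := by
  ext x y
  simp [partialTraceLeft, trace, Finset.sum_mul]

def piKronecker [Fintype ι] (A : ι → Matrix κ κ R) : Matrix (ι → κ) (ι → κ) R :=
  of fun v w => ∏ i, A i (v i) (w i)

theorem piKronecker_one [Fintype ι] [DecidableEq ι] [DecidableEq κ] :
    piKronecker (1 : ι → Matrix κ κ R) = 1 := by
  ext v w
  simp [piKronecker, one_apply, Finset.prod_boole, funext_iff]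

theorem piKronecker_mul [Fintype ι] [DecidableEq ι] [Fintype κ] (A B : ι → Matrix κ κ R) :
    piKronecker (A * B) = piKronecker A * piKronecker B := by
  ext v w
  simp only [piKronecker, of_apply, Pi.mul_apply, mul_apply, Fintype.prod_sum,
    ← Finset.prod_mul_distrib]

theorem prod_ofFn_piKronecker [Fintype ι] [DecidableEq ι] [Fintype κ] [DecidableEq κ]
    {k : ℕ} (A : Fin k → ι → Matrix κ κ R) :
    (List.ofFn fun i => piKronecker (A i)).prod = piKronecker (List.ofFn A).prod := by
  induction k with
  | zero => exact piKronecker_one.symm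
  | succ k ih =>
    rw [List.ofFn_succ, List.prod_cons, ih, List.ofFn_succ, List.prod_cons, piKronecker_mul]

def embedFactor [Fintype ι] [DecidableEq ι] [DecidableEq κ] (j : ι) :
    Matrix (κ × β) (κ × β) R →ₗ[R] Matrix ((ι → κ) × β) ((ι → κ) × β) R where
  toFun M := of fun p q => M (p.1 j, p.2) (q.1 j, q.2) *
    ∏ c ∈ Finset.univ.filter (fun c => c ≠ j), (if p.1 c = q.1 c then (1 : R) else 0)
  map_add' M M' := by ext; simp [add_mul]
  map_smul' c M := by ext; simp [mul_assoc]

theorem embedFactor_kronecker_one [Fintype ι] [DecidableEq ι] [DecidableEq κ] [DecidableEq β]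
    (j : ι) (A : Matrix κ κ R) :
    embedFactor j (A ⊗ₖ (1 : Matrix β β R)) = piKronecker (Pi.mulSingle j A) ⊗ₖ 1 := by
  ext ⟨v, x⟩ ⟨w, y⟩
  simp only [embedFactor, LinearMap.coe_mk, AddHom.coe_mk, of_apply, kronecker_apply,
    piKronecker, ← Finset.mul_prod_erase Finset.univ _ (Finset.mem_univ j), Finset.filter_ne',
    Pi.mulSingle_eq_same]
  have hoff : ∀ c ∈ Finset.univ.erase j,
      (Pi.mulSingle j A : ι → Matrix κ κ R) c (v c) (w c) = if v c = w c then 1 else 0 :=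
    fun c hc => by rw [Pi.mulSingle_eq_of_ne (Finset.ne_of_mem_erase hc), one_apply]
  rw [Finset.prod_congr rfl hoff]
  ring

end Matrix

namespace GLnSoV

section

variable (n N : ℕ) (η : ℂ) (ξ : Fin N → ℂ) (K : Matrix (Fin n) (Fin n) ℂ)

theorem Raux_eq_smul_one_add (μ : ℂ) (j : Fin N) :
    Raux n N η μ j = μ • 1 + Raux n N η 0 j := by
  have hdelta : ∀ p q : Fin n × (Fin N → Fin n),
      (1 : Matrix (Fin n × Fin n) (Fin n × Fin n) ℂ) (p.1, p.2 j) (q.1, q.2 j) *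
        ∏ c ∈ Finset.univ.filter (fun c => c ≠ j), (if p.2 c = q.2 c then (1 : ℂ) else 0)
        = (1 : Matrix _ _ ℂ) p q := by
    intro p q
    simp only [one_apply, Finset.prod_boole, Prod.ext_iff, funext_iff, Finset.mem_filter,
      Finset.mem_univ, true_and]
    grind
  ext p q
  simp only [Raux, Rmat, of_apply, Matrix.add_apply, Matrix.smul_apply, smul_eq_mul, zero_smul,
    Matrix.zero_apply, zero_add, add_mul, mul_assoc, hdelta]

theorem hasPolyExpansion_Raux (c : ℂ) (j : Fin N) :
    HasPolyExpansion (fun x => Raux n N η (x - c) j) 1 1 := by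
  convert HasPolyExpansion.smul_add (1 : Matrix _ _ ℂ) (Raux n N η 0 j - c • 1) using 1
  funext x
  rw [Raux_eq_smul_one_add, sub_smul]
  abel

theorem hasPolyExpansion_monodromy (s : ℂ) :
    HasPolyExpansion (fun x => monodromy n N η ξ K (x - s)) N (Kaux n N K) := by
  have hR := HasPolyExpansion.list_prod fun j : Fin N =>
    hasPolyExpansion_Raux n N η (s + ξ j.rev) j.rev
  simpa [monodromy, sub_sub] using (HasPolyExpansion.const (Kaux n N K)).mul hR

theorem Kaux_eq_kronecker : Kaux n N K = K ⊗ₖ 1 := by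
  ext; simp [Kaux, one_apply]

theorem antisymH_eq_kronecker (m : ℕ) : antisymH n N m = antisym n m ⊗ₖ 1 := by
  ext; simp [antisymH, one_apply]

theorem hasPolyExpansion_fusedMonodromy (m : ℕ) :
    HasPolyExpansion
      (fun x => (List.ofFn fun j : Fin m => MauxJ n N η ξ K m j (x - (j : ℕ) * η)).prod)
      (m * N) (Ktensor n K m ⊗ₖ 1) := by
  have h := HasPolyExpansion.list_prod fun j : Fin m =>
    (hasPolyExpansion_monodromy n N η ξ K ((j : ℕ) * η)).map (embedFactor j)
  have hlead : (List.ofFn fun j : Fin m => embedFactor j (Kaux n N K)).prod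
      = Ktensor n K m ⊗ₖ 1 := by
    simp only [Kaux_eq_kronecker, embedFactor_kronecker_one]
    rw [prod_ofFn_kronecker_one, prod_ofFn_piKronecker, List.prod_ofFn_mulSingle (fun _ => K)]
    rfl
  rwa [hlead] at h

end

theorem transfer_polynomial_general (n N : ℕ) (η : ℂ) (ξ : Fin N → ℂ)
    (K : Matrix (Fin n) (Fin n) ℂ) :
    ∀ m : ℕ, 1 ≤ m → m ≤ n →
      ∃ A : ℕ → Matrix (Fin N → Fin n) (Fin N → Fin n) ℂ,
        (∀ lam : ℂ,
          transfer n N η ξ K m lam = ∑ k ∈ Finset.range (m * N + 1), lam ^ k • A k) ∧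
        A (m * N) = asymCoef n K m • (1 : Matrix (Fin N → Fin n) (Fin N → Fin n) ℂ) := by
  intro m _ _
  have h := ((HasPolyExpansion.const (antisymH n N m)).mul
    (hasPolyExpansion_fusedMonodromy n N η ξ K m)).map (partialTraceLeft _ _)
  rw [zero_add, antisymH_eq_kronecker, ← mul_kronecker_mul, mul_one,
    partialTraceLeft_kronecker] at h
  exact h

/-- each fused transfer matrix is polynomial in the spectral parameter of
degree `m·N` with central leading coefficient `tr(P⁻_{1…m} K₁⋯K_m)·Id`. -/
theorem transfer_polynomial (n N : ℕ) (hn : 1 ≤ n) (hN : 1 ≤ N) (η : ℂ) (ξ : Fin N → ℂ)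
    (K : Matrix (Fin n) (Fin n) ℂ) :
    ∀ m : ℕ, 1 ≤ m → m ≤ n →
      ∃ A : ℕ → Matrix (Fin N → Fin n) (Fin N → Fin n) ℂ,
        (∀ lam : ℂ,
          transfer n N η ξ K m lam = ∑ k ∈ Finset.range (m * N + 1), lam ^ k • A k) ∧
        A (m * N) = asymCoef n K m • (1 : Matrix (Fin N → Fin n) (Fin N → Fin n) ℂ) :=
  transfer_polynomial_general n N η ξ K

end GLnSoV
end
end
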